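/- Let k ≥ 1 and m ≥ 1 be integers, n = k·m, and let λ ∈ ℤ^n be the k-fold repetition of the block (m−1, m−2, …, 1, 0), i.e. λ = (m−1,…,1,0, m−1,…,1,0, …, m−1,…,1,0). Then λ is (k+1, 1)-admissible, and λ is the unique (k+1, 1)-admissible element μ ∈ ℤ^n with μ ⪯ λ. -/

import Mathlib

open scoped Classical

namespace CCnDAHA

variable {n : ℕ}



/-- σ(λ)_i = +1 if λ_i ≥ 0, −1 otherwise. -/
def sgn (lam : Fin n → ℤ) (i : Fin n) : ℤ := if 0 ≤ lam i then 1 else -1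

/-- `Prec lam i j` : index `i` strictly precedes `j` in the ordering i_1,…,i_n. -/
def Prec (lam : Fin n → ℤ) (i j : Fin n) : Prop :=
  |lam j| < |lam i| ∨
    (|lam i| = |lam j| ∧
      ((0 ≤ lam i ∧ lam j < 0) ∨
       (0 ≤ lam i ∧ 0 ≤ lam j ∧ i < j) ∨
       (lam i < 0 ∧ lam j < 0 ∧ j < i)))

/-- 0-based position of index `i` in the ordering i_1,…,i_n (position m−1). -/
noncomputable def posOf (lam : Fin n → ℤ) (i : Fin n) : ℕ :=
  (Finset.univ.filter (fun j => Prec lam j i)).card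

/-- ρ(λ)_i = σ(λ)_i · (n − m) where i = i_m. -/
noncomputable def rho (lam : Fin n → ℤ) (i : Fin n) : ℤ :=
  sgn lam i * ((n : ℤ) - 1 - (posOf lam i : ℤ))

/-- (a,b)-neighborhood. -/
noncomputable def IsNbhd (a b : ℤ) (lam : Fin n → ℤ) (i j : Fin n) : Prop :=
  |rho lam i| - |rho lam j| = a - 1 ∧
  |lam i| - |lam j| ≤ b ∧
  (|lam i| - |lam j| = b →
    ((0 ≤ lam i ∧ 0 ≤ lam j ∧ j < i) ∨
     (lam i < 0 ∧ lam j < 0 ∧ i < j) ∨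
     (lam i < 0 ∧ 0 ≤ lam j)))

/-- (a,b)-admissible: no (a,b)-neighborhood. -/
noncomputable def Admissible (a b : ℤ) (lam : Fin n → ℤ) : Prop :=
  ∀ i j, ¬ IsNbhd a b lam i j

/-- number of (a,b)-neighborhoods. -/
noncomputable def nbhdCount (a b : ℤ) (lam : Fin n → ℤ) : ℕ :=
  ((Finset.univ : Finset (Fin n × Fin n)).filter (fun p => IsNbhd a b lam p.1 p.2)).card

/-- dot action of the affine simple reflection s_i (0 ≤ i ≤ n, 1-based paper indexing). -/
noncomputable def dotAct (i : ℕ) (lam : Fin n → ℤ) : Fin n → ℤ := fun j =>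
  if i = 0 then (if (j : ℕ) = 0 then -1 - lam j else lam j)
  else if i = n then (if (j : ℕ) + 1 = n then -lam j else lam j)
  else if h1 : (j : ℕ) + 1 = i ∧ i < n then lam ⟨(j : ℕ) + 1, by omega⟩
  else if h2 : (j : ℕ) = i then lam ⟨(j : ℕ) - 1, by have := j.isLt; omega⟩
  else lam j

/-- pairing ⟨λ, α_i⟩, for 0 ≤ i ≤ n. -/
noncomputable def pairing (i : ℕ) (lam : Fin n → ℤ) : ℤ :=
  if hn : n = 0 then 0
  else if i = 0 then -2 * lam ⟨0, by omega⟩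
  else if i = n then 2 * lam ⟨n - 1, by omega⟩
  else lam ⟨(i - 1) % n, Nat.mod_lt _ (by omega)⟩ - lam ⟨i % n, Nat.mod_lt _ (by omega)⟩

/-- partial sum λ_1 + ⋯ + λ_j. -/
def psum (lam : Fin n → ℤ) (j : Fin n) : ℤ :=
  ∑ i ∈ Finset.univ.filter (fun i => i ≤ j), lam i

/-- dominance order: μ ≤ λ. -/
def DomLE (mu lam : Fin n → ℤ) : Prop := ∀ j, psum mu j ≤ psum lam j

/-- λ⁺ : the weakly decreasing rearrangement of (|λ_1|,…,|λ_n|). -/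
noncomputable def lamPlus (lam : Fin n → ℤ) : Fin n → ℤ := fun j =>
  ((Multiset.sort (Multiset.map (fun i => |lam i|) Finset.univ.val) (· ≤ ·)).reverse).getD (j : ℕ) 0

/-- λ ≻ μ. -/
noncomputable def SuccOrd (lam mu : Fin n → ℤ) : Prop :=
  (DomLE (lamPlus mu) (lamPlus lam) ∧ lamPlus lam ≠ lamPlus mu) ∨
  (lamPlus lam = lamPlus mu ∧ DomLE mu lam ∧ lam ≠ mu)

/-- |λ_{i_m}|, with the sentinel value 0 at m = n+1. -/
noncomputable def absAt (lam : Fin n → ℤ) (m : ℕ) : ℤ :=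
  if m = n + 1 then 0
  else ∑ i ∈ Finset.univ.filter (fun i => posOf lam i + 1 = m), |lam i|

/-- σ(λ)_{i_m}, with sentinel value +1 at m = n+1. -/
noncomputable def sgAt (lam : Fin n → ℤ) (m : ℕ) : ℤ :=
  if m = n + 1 then 1
  else ∑ i ∈ Finset.univ.filter (fun i => posOf lam i + 1 = m), sgn lam i

/-- the (1-based) value of the index i_m, with sentinel value n+1 at m = n+1. -/
noncomputable def ixAt (lam : Fin n → ℤ) (m : ℕ) : ℕ :=
  if m = n + 1 then n + 1
  else ∑ i ∈ Finset.univ.filter (fun i => posOf lam i + 1 = m), ((i : ℕ) + 1)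

/-- β_m ∈ {0,1}. -/
noncomputable def betaAt (lam : Fin n → ℤ) (m : ℕ) : ℤ :=
  if (sgAt lam m = 1 ∧ sgAt lam (m + 1) = 1 ∧ ixAt lam (m + 1) < ixAt lam m) ∨
     (sgAt lam m = -1 ∧ sgAt lam (m + 1) = -1 ∧ ixAt lam m < ixAt lam (m + 1)) ∨
     (sgAt lam m = -1 ∧ sgAt lam (m + 1) = 1)
  then 1 else 0

/-- p_m = ⌊(|λ_{i_m}| − |λ_{i_{m+1}}| − β_m)/b⌋ (b plays the role of r−1). -/
noncomputable def pAt (b : ℤ) (lam : Fin n → ℤ) (m : ℕ) : ℤ :=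
  Int.fdiv (absAt lam m - absAt lam (m + 1) - betaAt lam m) b

/-- the b-quotient λ^{quot} (b plays the role of r−1): j-th entry is p_j + ⋯ + p_n
(1-based j = (j:Fin n) + 1). -/
noncomputable def quotOf (b : ℤ) (lam : Fin n → ℤ) : Fin n → ℤ := fun j =>
  ∑ m ∈ Finset.Icc ((j : ℕ) + 1) n, pAt b lam m

/-- fundamental weight ϖ_j (1-based j = (j : Fin n)+1): first j entries 1, rest 0. -/
def varpi (j : Fin n) : Fin n → ℤ := fun i => if i ≤ j then 1 else 0

/-!
Put the indices in the order i₁, …, iₙ that defines ρ, and let `posOf` give an index's position in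
it. By (i), a (k+1,1)-neighbourhood is a pair of indices at positions p and p + k; as (iii) is
vacuous when their absolute values agree, admissibility forces the absolute values, read in this
order, to drop by at least one every k steps: the p-th entry of μ⁺ is at least ⌊(n-1-p)/k⌋. For
n = km the staircase λ attains this bound, so μ⁺ ≥ λ⁺ entrywise and μ ≺ λ with μ⁺ ≠ λ⁺ is
impossible. If μ⁺ = λ⁺, every drop is exactly one, and condition (iii) forces μ ≥ 0 and places the
index at position p to the left of the one at position p + k. Hence, scanning μ from the left,
each value v < m - 1 has so far occurred at most as often as v + 1 did strictly before. At the
first index i with μᵢ ≠ λᵢ, dominance gives μᵢ < λᵢ; as μ and λ agree before i, counting the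
occurrences of μᵢ and μᵢ + 1 among λ₁, …, λᵢ₋₁ contradicts this.
-/

open Finset

section Position

variable {lam : Fin n → ℤ}

/-- `2 * n - i` exceeds every index, so negative entries come after nonnegative ones of the same
absolute value, in decreasing order of index. -/
def precKey (lam : Fin n → ℤ) (i : Fin n) : ℤ ×ₗ ℤ :=
  toLex (-|lam i|, if 0 ≤ lam i then (i : ℤ) else 2 * n - i)

lemma prec_iff_precKey_lt {i j : Fin n} : Prec lam i j ↔ precKey lam i < precKey lam j := by
  have := i.isLt
  have := j.isLt
  rw [Prec, precKey, precKey, Prod.Lex.toLex_lt_toLex, Fin.lt_def, Fin.lt_def, abs_eq_max_neg,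
    abs_eq_max_neg]
  split_ifs <;> omega

lemma precKey_injective : Function.Injective (precKey lam) := by
  intro i j h
  have := i.isLt
  have := j.isLt
  simp only [precKey, toLex_inj, Prod.mk.injEq] at h
  ext
  split_ifs at h <;> omega

lemma prec_or_prec_of_ne {i j : Fin n} (h : i ≠ j) : Prec lam i j ∨ Prec lam j i := by
  simp only [prec_iff_precKey_lt]
  exact lt_or_gt_of_ne (precKey_injective.ne h)

lemma posOf_lt_posOf {i j : Fin n} (h : Prec lam i j) : posOf lam i < posOf lam j := by
  refine card_lt_card ⟨fun x hx => ?_, fun hsub => ?_⟩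
  · simp only [mem_filter, mem_univ, true_and, prec_iff_precKey_lt] at hx ⊢
    exact hx.trans (prec_iff_precKey_lt.1 h)
  · have := hsub (by simpa using h)
    simp [prec_iff_precKey_lt] at this

lemma posOf_lt (lam : Fin n → ℤ) (i : Fin n) : posOf lam i < n := by
  refine (card_lt_card (filter_ssubset.2 ⟨i, mem_univ i, ?_⟩)).trans_eq (card_fin n)
  simp [prec_iff_precKey_lt]

lemma posOf_injective : Function.Injective (posOf lam) := by
  intro i j h
  by_contra hne
  rcases prec_or_prec_of_ne hne with h' | h' <;> have := posOf_lt_posOf (lam := lam) h' <;> omega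

noncomputable def posEquiv (lam : Fin n → ℤ) : Fin n ≃ Fin n :=
  Equiv.ofBijective (fun i => ⟨posOf lam i, posOf_lt lam i⟩)
    (Finite.injective_iff_bijective.1 fun _ _ h => posOf_injective (Fin.val_eq_of_eq h))

@[simp]
lemma posEquiv_apply_val (lam : Fin n → ℤ) (i : Fin n) : (posEquiv lam i : ℕ) = posOf lam i :=
  rfl

@[simp]
lemma posOf_posEquiv_symm (lam : Fin n → ℤ) (p : Fin n) :
    posOf lam ((posEquiv lam).symm p) = p := by
  rw [← posEquiv_apply_val, Equiv.apply_symm_apply]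

lemma abs_le_abs_of_posOf_le {i j : Fin n} (h : posOf lam i ≤ posOf lam j) :
    |lam j| ≤ |lam i| := by
  by_contra hlt
  exact (posOf_lt_posOf (Or.inl (lt_of_not_ge hlt) : Prec lam j i)).not_ge h

lemma posOf_eq_of_prec_imp_lt (e : Fin n ≃ Fin n) (he : ∀ i j, Prec lam i j → e i < e j)
    (i : Fin n) : posOf lam i = e i := by
  have hprec : ∀ j, Prec lam j i ↔ e j < e i := fun j =>
    ⟨he j i, fun hlt => (prec_or_prec_of_ne (ne_of_apply_ne e hlt.ne)).resolve_right
      fun h => (he i j h).not_gt hlt⟩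
  rw [posOf, ← Fin.card_Iio, ← filter_gt_eq_Iio]
  exact card_equiv e (by simp [hprec])

lemma abs_rho (lam : Fin n → ℤ) (i : Fin n) : |rho lam i| = (n : ℤ) - 1 - posOf lam i := by
  have := posOf_lt lam i
  rw [rho, abs_mul, abs_of_nonneg (by omega : (0 : ℤ) ≤ n - 1 - posOf lam i)]
  unfold sgn
  split_ifs <;> simp

lemma lamPlus_posEquiv (lam : Fin n → ℤ) (i : Fin n) : lamPlus lam (posEquiv lam i) = |lam i| := by
  set f : Fin n → ℤ := fun p => |lam ((posEquiv lam).symm p)|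
  have hmap : Multiset.map (fun i => |lam i|) univ.val = ↑(List.ofFn f).reverse := by
    rw [Multiset.coe_reverse, ← Fin.univ_val_map,
      show f = (fun i => |lam i|) ∘ (posEquiv lam).symm from rfl, ← Multiset.map_map,
      Multiset.map_univ_val_equiv]
  have hsorted : (List.ofFn f).reverse.Pairwise (· ≤ ·) :=
    List.pairwise_reverse.2 <| List.pairwise_ofFn.2 fun p q hpq =>
      abs_le_abs_of_posOf_le (by simpa using hpq.le)
  rw [lamPlus, hmap, Multiset.coe_sort, List.mergeSort_eq_self _ hsorted, List.reverse_reverse,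
    List.getD_eq_getElem _ _ (by simpa using (posEquiv lam i).isLt)]
  simp only [List.getElem_ofFn, f, Fin.eta, Equiv.symm_apply_apply]

lemma forall_lamPlus_eq_iff {f : Fin n → ℤ} :
    (∀ p, lamPlus lam p = f p) ↔ ∀ i, |lam i| = f (posEquiv lam i) := by
  rw [(posEquiv lam).symm.forall_congr_left]
  simp [lamPlus_posEquiv]

end Position

section Chain

variable {k : ℕ} {μ : Fin n → ℤ} {i j : Fin n}

lemma abs_rho_sub_abs_rho (hij : posOf μ j = posOf μ i + k) :
    |rho μ i| - |rho μ j| = (k : ℤ) + 1 - 1 := by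
  rw [abs_rho, abs_rho, hij]
  push_cast
  ring

variable (hadm : Admissible ((k : ℤ) + 1) 1 μ)
include hadm

lemma abs_lt_abs_of_posOf_eq_add (hij : posOf μ j = posOf μ i + k) : |μ j| < |μ i| := by
  refine (abs_le_abs_of_posOf_le (by omega)).lt_of_ne fun heq =>
    hadm i j ⟨abs_rho_sub_abs_rho hij, by omega, fun h => by omega⟩

lemma neg_of_posOf_eq_add (hij : posOf μ j = posOf μ i + k) (hdiff : |μ i| = |μ j| + 1)
    (hi : μ i < 0) : μ j < 0 := by
  by_contra hj
  exact hadm i j ⟨abs_rho_sub_abs_rho hij, by omega, fun _ => Or.inr (Or.inr ⟨hi, not_lt.1 hj⟩)⟩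

lemma lt_of_posOf_eq_add (hij : posOf μ j = posOf μ i + k) (hdiff : |μ i| = |μ j| + 1)
    (hi : 0 ≤ μ i) (hj : 0 ≤ μ j) : i < j := by
  rcases lt_trichotomy i j with hlt | rfl | hgt
  · exact hlt
  · omega
  · exact (hadm i j ⟨abs_rho_sub_abs_rho hij, by omega, fun _ => Or.inl ⟨hi, hj, hgt⟩⟩).elim

end Chain

section Extremal

variable {k : ℕ} {μ : Fin n → ℤ}

lemma sub_div_eq_sub_div_add_one {N a b : ℕ} (hk : 0 < k) (hb : b = a + k) (h : b ≤ N) :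
    (N - a) / k = (N - b) / k + 1 := by
  rw [Nat.div_eq_sub_div hk (by omega)]
  congr 2
  omega

lemma div_le_abs_of_admissible (hadm : Admissible ((k : ℤ) + 1) 1 μ) (i : Fin n) :
    (((n - 1 - posOf μ i) / k : ℕ) : ℤ) ≤ |μ i| := by
  rcases k.eq_zero_or_pos with rfl | hk
  · simp
  induction hd : n - posOf μ i using Nat.strong_induction_on generalizing i with
  | _ d ih =>
    by_cases hik : posOf μ i + k < n
    · set j := (posEquiv μ).symm ⟨posOf μ i + k, hik⟩
      have hij : posOf μ j = posOf μ i + k := posOf_posEquiv_symm μ _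
      have hj := ih _ (by omega) j rfl
      rw [sub_div_eq_sub_div_add_one hk hij (by omega)]
      have := abs_lt_abs_of_posOf_eq_add hadm hij
      push_cast
      omega
    · rw [Nat.div_eq_of_lt (by omega)]
      exact_mod_cast abs_nonneg (μ i)

lemma le_lamPlus_of_admissible (hadm : Admissible ((k : ℤ) + 1) 1 μ) (p : Fin n) :
    (((n - 1 - p) / k : ℕ) : ℤ) ≤ lamPlus μ p := by
  obtain ⟨i, rfl⟩ := (posEquiv μ).surjective p
  rw [lamPlus_posEquiv, posEquiv_apply_val]
  exact div_le_abs_of_admissible hadm i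

variable (hk : 0 < k) (hext : ∀ i, |μ i| = (((n - 1 - posOf μ i) / k : ℕ) : ℤ))
include hk hext

lemma abs_eq_abs_add_one_of_posOf_eq_add {i j : Fin n} (hij : posOf μ j = posOf μ i + k) :
    |μ i| = |μ j| + 1 := by
  rw [hext, hext, sub_div_eq_sub_div_add_one hk hij (by have := posOf_lt μ j; omega)]
  push_cast
  ring

lemma nonneg_of_extremal (hadm : Admissible ((k : ℤ) + 1) 1 μ) (i : Fin n) : 0 ≤ μ i := by
  induction hd : n - posOf μ i using Nat.strong_induction_on generalizing i with
  | _ d ih =>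
    by_contra hneg
    have hpos : 1 ≤ (n - 1 - posOf μ i) / k := by
      have := hext i
      have := abs_of_neg (not_le.1 hneg)
      omega
    have hik : posOf μ i + k < n := by
      have := (Nat.le_div_iff_mul_le hk).1 hpos
      omega
    set j := (posEquiv μ).symm ⟨posOf μ i + k, hik⟩
    have hij : posOf μ j = posOf μ i + k := posOf_posEquiv_symm μ _
    exact (neg_of_posOf_eq_add hadm hij (abs_eq_abs_add_one_of_posOf_eq_add hk hext hij)
      (not_le.1 hneg)).not_ge (ih _ (by omega) j rfl)

end Extremal

section Staircase

variable {k m : ℕ}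

def staircase (k m : ℕ) (i : Fin (k * m)) : ℤ := (m : ℤ) - 1 - ((i : ℕ) % m : ℕ)

def staircasePos (k m : ℕ) : Fin (k * m) ≃ Fin (k * m) :=
  finProdFinEquiv.symm.trans <|
    (Equiv.prodComm _ _).trans <| finProdFinEquiv.trans (finCongr (Nat.mul_comm m k))

lemma staircasePos_val (i : Fin (k * m)) :
    (staircasePos k m i : ℕ) = (i : ℕ) / m + k * ((i : ℕ) % m) := by
  simp [staircasePos]

lemma staircase_nonneg (i : Fin (k * m)) : 0 ≤ staircase k m i := by
  have := Nat.mod_lt i (CanonicallyOrderedAdd.mul_pos.1 i.pos).2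
  unfold staircase
  omega

lemma posOf_staircase (i : Fin (k * m)) : posOf (staircase k m) i = staircasePos k m i := by
  refine posOf_eq_of_prec_imp_lt _ (fun i j h => ?_) i
  obtain ⟨hk, hm⟩ := CanonicallyOrderedAdd.mul_pos.1 i.pos
  have hik : (i : ℕ) / m < k := Nat.div_lt_of_lt_mul (by simp [Nat.mul_comm])
  have hsi := staircase_nonneg i
  have hsj := staircase_nonneg j
  rw [Fin.lt_def, staircasePos_val, staircasePos_val]
  rw [Prec, abs_of_nonneg hsi, abs_of_nonneg hsj] at h
  unfold staircase at h hsi hsj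
  rcases h with h | ⟨h, h' | ⟨-, -, h'⟩ | h'⟩
  · have := Nat.mul_le_mul_left k (show (i : ℕ) % m + 1 ≤ (j : ℕ) % m by omega)
    rw [Nat.mul_succ] at this
    have := Nat.zero_le ((j : ℕ) / m)
    omega
  · omega
  · have hmod : (i : ℕ) % m = (j : ℕ) % m := by omega
    have hi := Nat.mod_add_div i m
    have hj := Nat.mod_add_div j m
    have := Nat.lt_of_mul_lt_mul_left (a := m) (show m * ((i : ℕ) / m) < m * ((j : ℕ) / m) by
      rw [Fin.lt_def] at h'; omega)
    rw [hmod]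
    omega
  · omega

lemma abs_staircase (i : Fin (k * m)) :
    |staircase k m i| = (((k * m - 1 - posOf (staircase k m) i) / k : ℕ) : ℤ) := by
  obtain ⟨hk, hm⟩ := CanonicallyOrderedAdd.mul_pos.1 i.pos
  have hik : (i : ℕ) / m < k := Nat.div_lt_of_lt_mul (by simp [Nat.mul_comm])
  have him := Nat.mod_lt i hm
  rw [posOf_staircase, staircasePos_val, abs_of_nonneg (staircase_nonneg i), staircase]
  generalize (i : ℕ) / m = b at hik ⊢
  generalize (i : ℕ) % m = a at him ⊢
  obtain ⟨c, hc⟩ : ∃ c, m = a + c + 1 := ⟨m - 1 - a, by omega⟩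
  have hkm : k * m = k * a + k * c + k := by
    rw [hc]
    ring
  rw [show k * m - 1 - (b + k * a) = (k - 1 - b) + k * c by omega,
    Nat.add_mul_div_left _ _ hk, Nat.div_eq_of_lt (by omega), zero_add]
  omega

lemma val_eq_add_one_of_staircasePos_eq_add {i j : Fin (k * m)}
    (h : (staircasePos k m j : ℕ) = staircasePos k m i + k) : (j : ℕ) = i + 1 := by
  have hk := (CanonicallyOrderedAdd.mul_pos.1 i.pos).1
  have hik : (i : ℕ) / m < k := Nat.div_lt_of_lt_mul (by simp [Nat.mul_comm])
  have hjk : (j : ℕ) / m < k := Nat.div_lt_of_lt_mul (by simp [Nat.mul_comm])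
  rw [staircasePos_val, staircasePos_val,
    show (i : ℕ) / m + k * ((i : ℕ) % m) + k = (i : ℕ) / m + k * ((i : ℕ) % m + 1) by ring] at h
  have hdiv := congrArg (· / k) h
  have hmod := congrArg (· % k) h
  simp only [Nat.add_mul_div_left _ _ hk, Nat.add_mul_mod_self_left, Nat.div_eq_of_lt hik,
    Nat.div_eq_of_lt hjk, Nat.mod_eq_of_lt hik, Nat.mod_eq_of_lt hjk] at hdiv hmod
  have hi := Nat.mod_add_div i m
  have hj := Nat.mod_add_div j m
  rw [hmod] at hj
  omega

lemma staircase_admissible : Admissible ((k : ℤ) + 1) 1 (staircase k m) := by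
  rintro i j ⟨hrho, -, hsign⟩
  have hk := (CanonicallyOrderedAdd.mul_pos.1 i.pos).1
  have hij : posOf (staircase k m) j = posOf (staircase k m) i + k := by
    rw [abs_rho, abs_rho] at hrho
    have := posOf_lt (staircase k m) j
    omega
  have hdiff := abs_eq_abs_add_one_of_posOf_eq_add hk abs_staircase hij
  rw [posOf_staircase, posOf_staircase] at hij
  have hji := val_eq_add_one_of_staircasePos_eq_add hij
  rcases hsign (by omega) with ⟨-, -, h⟩ | ⟨h, -⟩ | ⟨h, -⟩
  · rw [Fin.lt_def] at h
    omega
  all_goals exact absurd (staircase_nonneg i) (not_le.2 h)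

end Staircase

section Uniqueness

variable {k m : ℕ}

lemma eq_of_domLE {f g : Fin n → ℤ} (hdom : DomLE f g)
    (h : ∀ i, (∀ j < i, f j = g j) → g i ≤ f i) : f = g := by
  funext i
  induction i using WellFoundedLT.induction with
  | ind i ih =>
    have hsum := hdom i
    rw [psum, psum, filter_ge_eq_Iic, Iic_eq_cons_Iio, sum_cons, sum_cons,
      sum_congr rfl fun j hj => ih j (mem_Iio.1 hj)] at hsum
    exact le_antisymm ((add_le_add_iff_right _).1 hsum) (h i ih)

lemma card_filter_staircase_add_one_le (i : Fin (k * m)) {v : ℤ} (hv₀ : 0 ≤ v)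
    (hv : v + 1 ≤ staircase k m i) :
    #{j ∈ Iio i | staircase k m j = v + 1} ≤ #{j ∈ Iio i | staircase k m j = v} := by
  have hm := (CanonicallyOrderedAdd.mul_pos.1 i.pos).2
  refine card_le_card_of_injOn (fun j => ⟨min (j + 1) i, (min_le_right _ _).trans_lt i.isLt⟩)
    (fun j hj => ?_) (fun j₁ hj₁ j₂ hj₂ h => ?_)
  · simp only [coe_filter, mem_Iio, Set.mem_ofPred_eq, Fin.lt_def] at hj ⊢
    have hval : min ((j : ℕ) + 1) i = j + 1 := min_eq_left hj.1
    unfold staircase at hj hv ⊢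
    simp only [hval]
    have hmod : ((j : ℕ) + 1) % m = (j : ℕ) % m + 1 := by
      rw [Nat.add_mod, Nat.mod_eq_of_lt (show 1 < m by omega), Nat.mod_eq_of_lt (by omega)]
    rw [hmod]
    refine ⟨lt_of_le_of_ne hj.1 fun hji => ?_, by omega⟩
    rw [← hji, hmod] at hv
    omega
  · simp only [coe_filter, mem_Iio, Set.mem_ofPred_eq, Fin.lt_def] at hj₁ hj₂
    simp only [Fin.mk.injEq] at h
    ext
    omega

variable {μ : Fin (k * m) → ℤ} (hadm : Admissible ((k : ℤ) + 1) 1 μ)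
  (hext : ∀ i, |μ i| = (((k * m - 1 - posOf μ i) / k : ℕ) : ℤ))
include hadm hext

lemma card_filter_Iic_le_card_filter_add_one (i : Fin (k * m)) (hi : μ i + 1 < m) :
    #{j ∈ Iic i | μ j = μ i} ≤ #{j ∈ Iio i | μ j = μ i + 1} := by
  obtain ⟨hk, hm⟩ := CanonicallyOrderedAdd.mul_pos.1 i.pos
  have hnn := nonneg_of_extremal hk hext hadm
  have hk_le : ∀ j, μ j = μ i → k ≤ posOf μ j := by
    intro j hj
    by_contra hlt
    have : m - 1 ≤ (k * m - 1 - posOf μ j) / k := (Nat.le_div_iff_mul_le hk).2 <| by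
      rw [Nat.sub_one_mul, Nat.mul_comm m k]
      omega
    have := hext j
    rw [abs_of_nonneg (hnn j)] at this
    omega
  -- `pred j`, the index `k` positions before `j`, carries the value `μ j + 1` and lies left of `j`
  set pred : Fin (k * m) → Fin (k * m) :=
    fun j => (posEquiv μ).symm ⟨posOf μ j - k, (Nat.sub_le _ _).trans_lt (posOf_lt μ j)⟩
  have hpred : ∀ j, posOf μ (pred j) = posOf μ j - k := fun j => posOf_posEquiv_symm μ _
  refine card_le_card_of_injOn pred (fun j hj => ?_) (fun j₁ hj₁ j₂ hj₂ h => ?_)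
  · simp only [coe_filter, mem_Iic, mem_Iio, Set.mem_ofPred_eq] at hj ⊢
    have hpos : posOf μ j = posOf μ (pred j) + k := by
      have := hpred j
      have := hk_le j hj.2
      omega
    have habs := abs_eq_abs_add_one_of_posOf_eq_add hk hext hpos
    refine ⟨(lt_of_posOf_eq_add hadm hpos habs (hnn _) (hnn _)).trans_le hj.1, ?_⟩
    rw [abs_of_nonneg (hnn _), abs_of_nonneg (hnn _), hj.2] at habs
    exact habs
  · simp only [coe_filter, mem_Iic, Set.mem_ofPred_eq] at hj₁ hj₂
    have h' := congrArg (posOf μ) h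
    rw [hpred, hpred] at h'
    have := hk_le j₁ hj₁.2
    have := hk_le j₂ hj₂.2
    exact posOf_injective (lam := μ) (by omega)

lemma staircase_le_of_eqOn_Iio (i : Fin (k * m)) (hagree : ∀ j < i, μ j = staircase k m j) :
    staircase k m i ≤ μ i := by
  obtain ⟨hk, hm⟩ := CanonicallyOrderedAdd.mul_pos.1 i.pos
  have hnn := nonneg_of_extremal hk hext hadm
  by_contra! hlt
  have hfilter : ∀ v, {j ∈ Iio i | μ j = v} = {j ∈ Iio i | staircase k m j = v} :=
    fun v => filter_congr fun j hj => by rw [hagree j (mem_Iio.1 hj)]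
  have hi : μ i + 1 < m := by
    unfold staircase at hlt
    omega
  have := card_filter_Iic_le_card_filter_add_one hadm hext i hi
  rw [Iic_eq_cons_Iio, filter_cons_of_pos (fun j => μ j = μ i) _ _ _ rfl, card_cons, hfilter,
    hfilter] at this
  have := card_filter_staircase_add_one_le i (hnn i) (by omega)
  omega

end Uniqueness

theorem stmt8_general (k m : ℕ) :
    Admissible ((k : ℤ) + 1) 1
      (fun i : Fin (k * m) => (m : ℤ) - 1 - ((i : ℕ) % m : ℕ)) ∧
    ∀ mu : Fin (k * m) → ℤ,
      Admissible ((k : ℤ) + 1) 1 mu →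
      (SuccOrd (fun i : Fin (k * m) => (m : ℤ) - 1 - ((i : ℕ) % m : ℕ)) mu ∨
        mu = fun i : Fin (k * m) => (m : ℤ) - 1 - ((i : ℕ) % m : ℕ)) →
      mu = fun i : Fin (k * m) => (m : ℤ) - 1 - ((i : ℕ) % m : ℕ) := by
  refine ⟨staircase_admissible, fun mu hadm hord => ?_⟩
  have hstair : ∀ p : Fin (k * m), lamPlus (staircase k m) p = (((k * m - 1 - p) / k : ℕ) : ℤ) :=
    forall_lamPlus_eq_iff.2 fun i => by rw [abs_staircase, posEquiv_apply_val]
  rcases hord with (⟨hdom, hne⟩ | ⟨hplus, hdom, -⟩) | rfl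
  · refine absurd (eq_of_domLE hdom fun p _ => ?_).symm hne
    exact (hstair p).trans_le (le_lamPlus_of_admissible hadm p)
  · have hext := forall_lamPlus_eq_iff.1 fun p => (congrFun hplus p).symm.trans (hstair p)
    exact eq_of_domLE hdom (staircase_le_of_eqOn_Iio hadm (by simpa using hext))
  · rfl

/-- for n = km, the k-fold repetition λ of (m−1,…,1,0) is (k+1,1)-admissible
and is the unique (k+1,1)-admissible element μ with μ ⪯ λ. -/
theorem stmt8 (k m : ℕ) (hk : 1 ≤ k) (hm : 1 ≤ m) :
    Admissible ((k : ℤ) + 1) 1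
      (fun i : Fin (k * m) => (m : ℤ) - 1 - ((i : ℕ) % m : ℕ)) ∧
    ∀ mu : Fin (k * m) → ℤ,
      Admissible ((k : ℤ) + 1) 1 mu →
      (SuccOrd (fun i : Fin (k * m) => (m : ℤ) - 1 - ((i : ℕ) % m : ℕ)) mu ∨
        mu = fun i : Fin (k * m) => (m : ℤ) - 1 - ((i : ℕ) % m : ℕ)) →
      mu = fun i : Fin (k * m) => (m : ℤ) - 1 - ((i : ℕ) % m : ℕ) :=
  stmt8_general k m

end CCnDAHA
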